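/- arXiv:1209.3049 — 7 statements merged into one kernel-verified Lean document; each statement's English description precedes it below -/
import Mathlib

section
/- Let f : ℝⁿ → ℝ be a polynomial of degree at most 2d whose global infimum over ℝⁿ equals its minimum over the ball {x : Σᵢ xᵢ^{2d} ≤ M}. Then min{f(x) : Σᵢ xᵢ^{2d} ≤ M} = sup_{λ ≥ 0} inf_{x ∈ ℝⁿ} (f(x) - λ(M - Σᵢ xᵢ^{2d})). -/
open MvPolynomial

/-- If the global infimum of `f` over `ℝⁿ` equals its minimum over the ball
`{x : ∑ xᵢ^(2d) ≤ M}` (i.e. the ball minimum is a global lower bound), then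
`min {f(x) : ∑ xᵢ^(2d) ≤ M} = sup_{λ ≥ 0} inf_x (f(x) - λ(M - ∑ xᵢ^(2d)))`. -/
theorem stmt_2 (n d : ℕ) (hd : 1 ≤ d) (f : MvPolynomial (Fin n) ℝ)
    (hdeg : f.totalDegree ≤ 2 * d) (M : ℝ) (hM : 0 < M)
    (hglob : ∀ x : Fin n → ℝ,
      sInf {y : ℝ | ∃ x : Fin n → ℝ, (∑ i, x i ^ (2 * d)) ≤ M ∧ y = eval x f} ≤
        eval x f) :
    sInf {y : ℝ | ∃ x : Fin n → ℝ, (∑ i, x i ^ (2 * d)) ≤ M ∧ y = eval x f} =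
      sSup {c : ℝ | ∃ lam : ℝ, 0 ≤ lam ∧
        ∀ x : Fin n → ℝ, c ≤ eval x f - lam * (M - ∑ i, x i ^ (2 * d))} := by
  set S := {y : ℝ | ∃ x : Fin n → ℝ, (∑ i, x i ^ (2 * d)) ≤ M ∧ y = eval x f}
  set m := sInf S with hm
  have hSne : S.Nonempty := by
    refine ⟨eval (fun _ => (0:ℝ)) f, fun _ => 0, ?_, rfl⟩
    have : (∑ i : Fin n, (0:ℝ) ^ (2 * d)) = 0 := by
      simp [zero_pow]; omega
    linarith
  -- m is in the sup-set (take lam = 0)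
  have hmem : m ∈ {c : ℝ | ∃ lam : ℝ, 0 ≤ lam ∧
      ∀ x : Fin n → ℝ, c ≤ eval x f - lam * (M - ∑ i, x i ^ (2 * d))} := by
    exact ⟨0, le_refl 0, fun x => by simpa using hglob x⟩
  -- every element of the sup-set is ≤ m
  have hub : ∀ c ∈ {c : ℝ | ∃ lam : ℝ, 0 ≤ lam ∧
      ∀ x : Fin n → ℝ, c ≤ eval x f - lam * (M - ∑ i, x i ^ (2 * d))}, c ≤ m := by
    rintro c ⟨lam, hlam, hc⟩
    refine le_csInf hSne ?_
    rintro y ⟨x, hx, rfl⟩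
    have h1 := hc x
    have h2 : 0 ≤ lam * (M - ∑ i, x i ^ (2 * d)) :=
      mul_nonneg hlam (by linarith)
    linarith
  exact le_antisymm (le_csSup ⟨m, hub⟩ hmem) (csSup_le ⟨m, hmem⟩ hub)
end

section
/- For the univariate polynomial f(x) = x⁴ - 8x³ + 8x² + 1 and M = 1, the minimum of f over {x ∈ ℝ : x⁴ ≤ 1} equals 1, while sup_{λ ≥ 0} inf_{x ∈ ℝ} (f(x) - λ(1 - x⁴)) = 0; in particular the Lagrangian lower bound is strict. -/
/-- For `f(x) = x⁴ - 8x³ + 8x² + 1` and `M = 1`, the minimum of `f` over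
`{x : x⁴ ≤ 1}` equals `1`, while `sup_{λ ≥ 0} inf_x (f(x) - λ(1 - x⁴)) = 0`;
in particular the Lagrangian lower bound is strict. -/
theorem stmt_3 :
    sInf {y : ℝ | ∃ x : ℝ, x ^ 4 ≤ 1 ∧ y = x ^ 4 - 8 * x ^ 3 + 8 * x ^ 2 + 1} = 1 ∧
    sSup {c : ℝ | ∃ lam : ℝ, 0 ≤ lam ∧
      ∀ x : ℝ, c ≤ (x ^ 4 - 8 * x ^ 3 + 8 * x ^ 2 + 1) - lam * (1 - x ^ 4)} = 0 ∧
    sSup {c : ℝ | ∃ lam : ℝ, 0 ≤ lam ∧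
      ∀ x : ℝ, c ≤ (x ^ 4 - 8 * x ^ 3 + 8 * x ^ 2 + 1) - lam * (1 - x ^ 4)} <
    sInf {y : ℝ | ∃ x : ℝ, x ^ 4 ≤ 1 ∧ y = x ^ 4 - 8 * x ^ 3 + 8 * x ^ 2 + 1} := by
  have hinf : sInf {y : ℝ | ∃ x : ℝ, x ^ 4 ≤ 1 ∧ y = x ^ 4 - 8 * x ^ 3 + 8 * x ^ 2 + 1} = 1 := by
    have hmem : (1 : ℝ) ∈ {y : ℝ | ∃ x : ℝ, x ^ 4 ≤ 1 ∧ y = x ^ 4 - 8 * x ^ 3 + 8 * x ^ 2 + 1} :=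
      ⟨0, by norm_num⟩
    have hlb : ∀ y ∈ {y : ℝ | ∃ x : ℝ, x ^ 4 ≤ 1 ∧ y = x ^ 4 - 8 * x ^ 3 + 8 * x ^ 2 + 1},
        (1 : ℝ) ≤ y := by
      rintro y ⟨x, hx, rfl⟩
      nlinarith [sq_nonneg x, sq_nonneg (x - 1), sq_nonneg (x + 1), sq_nonneg (x^2 - 1),
        sq_nonneg (x^2 + x), sq_nonneg (x^2 - x)]
    exact le_antisymm (csInf_le ⟨1, hlb⟩ hmem) (le_csInf ⟨1, hmem⟩ hlb)
  have hsup : sSup {c : ℝ | ∃ lam : ℝ, 0 ≤ lam ∧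
      ∀ x : ℝ, c ≤ (x ^ 4 - 8 * x ^ 3 + 8 * x ^ 2 + 1) - lam * (1 - x ^ 4)} = 0 := by
    have hmem : (0 : ℝ) ∈ {c : ℝ | ∃ lam : ℝ, 0 ≤ lam ∧
        ∀ x : ℝ, c ≤ (x ^ 4 - 8 * x ^ 3 + 8 * x ^ 2 + 1) - lam * (1 - x ^ 4)} := by
      refine ⟨1, by norm_num, fun x => ?_⟩
      nlinarith [sq_nonneg (x * (x - 2))]
    have hub : ∀ c ∈ {c : ℝ | ∃ lam : ℝ, 0 ≤ lam ∧
        ∀ x : ℝ, c ≤ (x ^ 4 - 8 * x ^ 3 + 8 * x ^ 2 + 1) - lam * (1 - x ^ 4)}, c ≤ (0 : ℝ) := by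
      rintro c ⟨lam, hlam, h⟩
      rcases le_total lam 1 with hl | hl
      · have := h 2; norm_num at this; linarith
      · have := h 0; norm_num at this; linarith
    exact le_antisymm (csSup_le ⟨0, hmem⟩ hub) (le_csSup ⟨0, hub⟩ hmem)
  exact ⟨hinf, hsup, by rw [hinf, hsup]; norm_num⟩
end

section
/- Every x ∈ ℝ satisfies x⁶ + 3x⁴ - 9x² ≥ -2·3^{3/2}, i.e., the number -2·3^{3/2} is a lower bound for f(x) = x⁶ + 3x⁴ - 9x² on ℝ. -/
/-- Every `x ∈ ℝ` satisfies `x⁶ + 3x⁴ - 9x² ≥ -2·3^(3/2)`. -/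
theorem stmt_8 (x : ℝ) :
    -2 * (3 : ℝ) ^ ((3 : ℝ) / 2) ≤ x ^ 6 + 3 * x ^ 4 - 9 * x ^ 2 := by
  have hy : ((3 : ℝ) ^ ((3 : ℝ) / 2)) ^ 2 = 27 := by
    rw [← Real.rpow_natCast ((3:ℝ) ^ ((3:ℝ)/2)) 2, ← Real.rpow_mul (by norm_num)]
    norm_num
  have hpos : (0 : ℝ) < (3 : ℝ) ^ ((3 : ℝ) / 2) := Real.rpow_pos_of_pos (by norm_num) _
  nlinarith [sq_nonneg (x^2 - 1), sq_nonneg x, sq_nonneg ((3:ℝ)^((3:ℝ)/2) - 5),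
    sq_nonneg (x^2-1) , mul_nonneg (sq_nonneg (x^2-1)) (sq_nonneg x)]
end

section
/- Let f(x) = f(0) + Σᵢ₌₁ⁿ xᵢ^{2d} + f_α x^α be a polynomial with a single extra term f_α x^α where x^α is not a square times a constant, |α| < 2d, f_α ≠ 0. If M ≥ |α|·[(f_α/2d)^{2d}·α^α]^{1/(2d-|α|)}, then f(x) ≥ f(0) - (2d - |α|)·[(f_α/2d)^{2d}·α^α]^{1/(2d-|α|)} for all x with Σᵢ xᵢ^{2d} ≤ M. -/
/-!
Weighted AM-GM with the integer weights `α₁, …, αₙ` and `e = 2d - |α|`, which sum to `2d`, applied to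
the numbers `2d·xᵢ^(2d)/αᵢ` and `2d·c`, where `c^e = (f_α/2d)^(2d)·α^α`, gives
`|f_α x^α| ≤ ∑ᵢ xᵢ^(2d) + e·c` after taking `2d`-th roots.
-/

open Finset Real

theorem Real.prod_pow_le_pow_sum_mul_div_sum {ι : Type*} (s : Finset ι) (w : ι → ℕ) {z : ι → ℝ}
    (hz : ∀ i ∈ s, 0 ≤ z i) :
    ∏ i ∈ s, z i ^ w i ≤ ((∑ i ∈ s, w i * z i) / ∑ i ∈ s, w i) ^ ∑ i ∈ s, w i := by
  have hprod : 0 ≤ ∏ i ∈ s, z i ^ w i := prod_nonneg fun i hi => pow_nonneg (hz i hi) _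
  rcases Nat.eq_zero_or_pos (∑ i ∈ s, w i) with hW | hW
  · rw [hW, pow_zero]
    rw [sum_eq_zero_iff] at hW
    exact (prod_eq_one fun i hi => by rw [hW i hi, pow_zero]).le
  have hamgm := geom_mean_le_arith_mean s (fun i => (w i : ℝ)) z (fun i _ => by positivity)
    (by exact_mod_cast hW) hz
  simp only [rpow_natCast, ← Nat.cast_sum] at hamgm
  calc ∏ i ∈ s, z i ^ w i
      = ((∏ i ∈ s, z i ^ w i) ^ ((∑ i ∈ s, w i : ℕ) : ℝ)⁻¹) ^ ∑ i ∈ s, w i :=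
        (rpow_inv_natCast_pow hprod hW.ne').symm
    _ ≤ _ := pow_le_pow_left₀ (rpow_nonneg hprod _) hamgm _

theorem mul_prod_pow_le_sum_pow_add {ι : Type*} [Fintype ι] (α : ι → ℕ) {N : ℕ} (hN : N ≠ 0)
    (hαN : ∑ i, α i ≤ N) {a c : ℝ} (hc : 0 ≤ c)
    (hcA : c ^ (N - ∑ i, α i) = (a / N) ^ N * ∏ i, (α i : ℝ) ^ α i) {y : ι → ℝ}
    (hy : ∀ i, 0 ≤ y i) :
    a * ∏ i, y i ^ α i ≤ ∑ i, y i ^ N + (N - ∑ i, α i : ℕ) * c := by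
  set e := N - ∑ i, α i
  let w : Option ι → ℕ := fun o => o.elim e α
  -- when `α i = 0` the division is junk, but then `v (some i)` carries weight `0`
  let v : Option ι → ℝ := fun o => o.elim (N * c) fun i => N * y i ^ N / α i
  have hN' : (N : ℝ) ≠ 0 := by exact_mod_cast hN
  have hw : ∑ o, w o = N := by
    rw [Fintype.sum_option]
    exact Nat.sub_add_cancel hαN
  have hv : ∀ o ∈ univ, 0 ≤ v o := by
    rintro (_ | i) _
    · exact mul_nonneg (Nat.cast_nonneg _) hc
    · exact div_nonneg (mul_nonneg (Nat.cast_nonneg _) (pow_nonneg (hy i) _)) (Nat.cast_nonneg _)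
  have hprod_ne_zero : ∏ i, (α i : ℝ) ^ α i ≠ 0 := by
    refine prod_ne_zero_iff.2 fun i _ => ?_
    rcases Nat.eq_zero_or_pos (α i) with h | h
    · simp [h]
    · positivity
  have hgeom : ∏ o, v o ^ w o = (a * ∏ i, y i ^ α i) ^ N := by
    simp only [Fintype.prod_option, v, w, Option.elim, mul_pow, div_pow, prod_div_distrib,
      prod_mul_distrib, prod_pow_eq_pow_sum, hcA]
    have hpowN : (N : ℝ) ^ e * (N : ℝ) ^ ∑ i, α i = (N : ℝ) ^ N := by
      rw [← pow_add, Nat.sub_add_cancel hαN]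
    have hprodN : ∏ i, (y i ^ N) ^ α i = (∏ i, y i ^ α i) ^ N := by
      rw [← prod_pow]
      exact prod_congr rfl fun i _ => pow_right_comm _ _ _
    rw [hprodN]
    field_simp
    rw [← hpowN]
    ring
  have harith : ∑ o, w o * v o ≤ N * (∑ i, y i ^ N + e * c) := by
    have hterm : ∀ i, (α i : ℝ) * (N * y i ^ N / α i) ≤ N * y i ^ N := fun i => by
      rcases eq_or_ne (α i) 0 with h | h
      · simpa [h] using mul_nonneg (Nat.cast_nonneg N) (pow_nonneg (hy i) N)
      · rw [mul_div_cancel₀ _ (Nat.cast_ne_zero.2 h)]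
    calc ∑ o, w o * v o = e * (N * c) + ∑ i, (α i : ℝ) * (N * y i ^ N / α i) :=
          Fintype.sum_option _
      _ ≤ e * (N * c) + ∑ i, N * y i ^ N :=
          add_le_add_right (sum_le_sum fun i _ => hterm i) _
      _ = N * (∑ i, y i ^ N + e * c) := by rw [← mul_sum]; ring
  refine le_of_pow_le_pow_left₀ hN
    (add_nonneg (sum_nonneg fun i _ => pow_nonneg (hy i) _) (mul_nonneg (Nat.cast_nonneg _) hc)) ?_
  calc (a * ∏ i, y i ^ α i) ^ N = ∏ o, v o ^ w o := hgeom.symm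
    _ ≤ ((∑ o, w o * v o) / ∑ o, w o) ^ ∑ o, w o :=
        prod_pow_le_pow_sum_mul_div_sum univ w hv
    _ ≤ (N * (∑ i, y i ^ N + e * c) / N) ^ N := by
        rw [hw]
        gcongr
        exact div_nonneg (sum_nonneg fun o _ => mul_nonneg (Nat.cast_nonneg _) (hv o (mem_univ o)))
          (Nat.cast_nonneg _)
    _ = _ := by rw [mul_div_cancel_left₀ _ hN']

theorem stmt_10_general (n d : ℕ) (α : Fin n → ℕ)
    (hαlt : ∑ i, α i < 2 * d) (fα : ℝ) (f0 M : ℝ) :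
    ∀ x : Fin n → ℝ, (∑ i, x i ^ (2 * d)) ≤ M →
      f0 - (2 * (d : ℝ) - ((∑ i, α i : ℕ) : ℝ)) *
          (((fα / (2 * (d : ℝ))) ^ (2 * d) * ∏ i, ((α i : ℝ)) ^ (α i)) ^
            ((1 : ℝ) / (2 * (d : ℝ) - ((∑ i, α i : ℕ) : ℝ)))) ≤
        f0 + (∑ i, x i ^ (2 * d)) + fα * ∏ i, x i ^ (α i) := by
  intro x _
  have h2d : Even (2 * d) := even_two_mul d
  set A := (fα / (2 * (d : ℝ))) ^ (2 * d) * ∏ i, ((α i : ℝ)) ^ (α i)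
  have hA : 0 ≤ A := mul_nonneg (h2d.pow_nonneg _) (prod_nonneg fun i _ => by positivity)
  have he : 2 * (d : ℝ) - ((∑ i, α i : ℕ) : ℝ) = ((2 * d - ∑ i, α i : ℕ) : ℝ) := by
    rw [Nat.cast_sub hαlt.le]; push_cast; ring
  rw [he, one_div]
  have hcA : (A ^ ((2 * d - ∑ i, α i : ℕ) : ℝ)⁻¹) ^ (2 * d - ∑ i, α i) =
      (|fα| / (2 * d : ℕ)) ^ (2 * d) * ∏ i, ((α i : ℝ)) ^ (α i) := by
    rw [rpow_inv_natCast_pow hA (by omega), div_pow, h2d.pow_abs, ← div_pow]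
    push_cast
    rfl
  have key := mul_prod_pow_le_sum_pow_add α (by omega) hαlt.le (rpow_nonneg hA _) hcA
    (y := fun i => |x i|) (fun i => abs_nonneg _)
  simp only [h2d.pow_abs, ← abs_pow, ← abs_prod, ← abs_mul] at key
  linarith [neg_abs_le (fα * ∏ i, x i ^ α i)]

/-- For `f(x) = f(0) + ∑ᵢ xᵢ^(2d) + f_α x^α` with `0 < |α| < 2d` and
`f_α x^α` not a square, if `M ≥ |α|·[(f_α/2d)^(2d)·α^α]^(1/(2d-|α|))` then
`f(x) ≥ f(0) - (2d-|α|)·[(f_α/2d)^(2d)·α^α]^(1/(2d-|α|))` on the ball. -/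
theorem stmt_10 (n d : ℕ) (hd : 1 ≤ d) (α : Fin n → ℕ)
    (hα0 : 0 < ∑ i, α i) (hαlt : ∑ i, α i < 2 * d)
    (fα : ℝ) (hfα : fα ≠ 0) (hns : ¬ (0 ≤ fα ∧ ∀ i, Even (α i)))
    (f0 M : ℝ) (hM : 0 < M)
    (hMge : ((∑ i, α i : ℕ) : ℝ) *
        (((fα / (2 * (d : ℝ))) ^ (2 * d) * ∏ i, ((α i : ℝ)) ^ (α i)) ^
          ((1 : ℝ) / (2 * (d : ℝ) - ((∑ i, α i : ℕ) : ℝ)))) ≤ M) :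
    ∀ x : Fin n → ℝ, (∑ i, x i ^ (2 * d)) ≤ M →
      f0 - (2 * (d : ℝ) - ((∑ i, α i : ℕ) : ℝ)) *
          (((fα / (2 * (d : ℝ))) ^ (2 * d) * ∏ i, ((α i : ℝ)) ^ (α i)) ^
            ((1 : ℝ) / (2 * (d : ℝ) - ((∑ i, α i : ℕ) : ℝ)))) ≤
        f0 + (∑ i, x i ^ (2 * d)) + fα * ∏ i, x i ^ (α i) :=
  stmt_10_general n d α hαlt fα f0 M
end

section
/- Let f(x) = f(0) + Σᵢ₌₁ⁿ xᵢ^{2d} + f_α x^α with |α| < 2d and f_α x^α not a square. If 0 < M < |α|·[(f_α/2d)^{2d}·α^α]^{1/(2d-|α|)}, then f(x) ≥ f(0) + M - |f_α|·[(M/|α|)^{|α|}·α^α]^{1/(2d)} for all x with Σᵢ xᵢ^{2d} ≤ M. -/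
/-!
Write `S = ∑ xᵢ^(2d)`, `s = |α|` and `t = s / 2d < 1`. By AM-GM,
`|x^α|^(2d) = ∏ (xᵢ^(2d))^αᵢ ≤ (S/s)^s α^α`, so `|f_α x^α| ≤ k S^t` with
`k = |f_α| (α^α / s^s)^(1/2d)`, and `f(x) - f(0) ≥ S - k S^t`. The function `S ↦ S - k S^t`
is decreasing on `[0, M]` as soon as `M^(1-t) ≤ k t`, and this is the bound on `M` rewritten.
-/

open Finset

theorem prod_pow_le_weighted_mean_pow {ι : Type*} (s : Finset ι) (w : ι → ℕ) (z : ι → ℝ)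
    (hz : ∀ i ∈ s, 0 ≤ z i) (hw : 0 < ∑ i ∈ s, w i) :
    ∏ i ∈ s, z i ^ w i ≤
      ((∑ i ∈ s, (w i : ℝ) * z i) / ∑ i ∈ s, (w i : ℝ)) ^ (∑ i ∈ s, w i) := by
  have hwR : (0 : ℝ) < ∑ i ∈ s, (w i : ℝ) := by exact_mod_cast hw
  have hprod : 0 ≤ ∏ i ∈ s, z i ^ w i := prod_nonneg fun i hi => pow_nonneg (hz i hi) _
  have amgm := Real.geom_mean_le_arith_mean s (fun i => (w i : ℝ)) z
    (fun _ _ => Nat.cast_nonneg _) hwR hz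
  simp only [Real.rpow_natCast] at amgm
  calc ∏ i ∈ s, z i ^ w i
      = ((∏ i ∈ s, z i ^ w i) ^ (∑ i ∈ s, (w i : ℝ))⁻¹) ^ (∑ i ∈ s, w i) := by
        rw [← Real.rpow_natCast, ← Real.rpow_mul hprod, Nat.cast_sum, inv_mul_cancel₀ hwR.ne',
          Real.rpow_one]
    _ ≤ _ := pow_le_pow_left₀ (Real.rpow_nonneg hprod _) amgm _

theorem prod_pow_le_sum_div_pow_mul_prod_pow {ι : Type*} (s : Finset ι) (α : ι → ℕ)
    (y : ι → ℝ) (hy : ∀ i ∈ s, 0 ≤ y i) (hα : 0 < ∑ i ∈ s, α i) :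
    ∏ i ∈ s, y i ^ α i ≤
      ((∑ i ∈ s, y i) / (∑ i ∈ s, α i : ℕ)) ^ (∑ i ∈ s, α i) *
        ∏ i ∈ s, (α i : ℝ) ^ α i := by
  have hsplit : ∀ i ∈ s, y i ^ α i = (y i / α i) ^ α i * (α i : ℝ) ^ α i := fun i _ => by
    rcases (α i).eq_zero_or_pos with h | h
    · simp [h]
    · rw [← mul_pow, div_mul_cancel₀ _ (by positivity)]
  have hmean : ∑ i ∈ s, (α i : ℝ) * (y i / α i) ≤ ∑ i ∈ s, y i :=
    sum_le_sum fun i hi => by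
      rcases (α i).eq_zero_or_pos with h | h
      · simp [h, hy i hi]
      · rw [mul_div_cancel₀ _ (by positivity)]
  have hz : ∀ i ∈ s, 0 ≤ y i / α i := fun i hi => div_nonneg (hy i hi) (Nat.cast_nonneg _)
  rw [prod_congr rfl hsplit, prod_mul_distrib, Nat.cast_sum]
  gcongr
  refine (prod_pow_le_weighted_mean_pow s α _ hz hα).trans ?_
  gcongr
  exact div_nonneg (sum_nonneg fun i hi => mul_nonneg (Nat.cast_nonneg _) (hz i hi))
    (by positivity)

theorem abs_prod_pow_le {ι : Type*} (s : Finset ι) (α : ι → ℕ) (x : ι → ℝ) {D : ℕ}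
    (hD : Even D) (hD0 : D ≠ 0) (hα : 0 < ∑ i ∈ s, α i) :
    |∏ i ∈ s, x i ^ α i| ≤
      (((∑ i ∈ s, x i ^ D) / (∑ i ∈ s, α i : ℕ)) ^ (∑ i ∈ s, α i) *
        ∏ i ∈ s, (α i : ℝ) ^ α i) ^ ((1 : ℝ) / D) := by
  have hpow : |∏ i ∈ s, x i ^ α i| ^ D = ∏ i ∈ s, (x i ^ D) ^ α i := by
    rw [abs_prod, ← prod_pow]
    refine prod_congr rfl fun i _ => ?_
    rw [abs_pow, ← pow_mul, mul_comm, pow_mul, hD.pow_abs]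
  have amgm := prod_pow_le_sum_div_pow_mul_prod_pow s α _ (fun i _ => hD.pow_nonneg (x i)) hα
  rw [← hpow] at amgm
  calc |∏ i ∈ s, x i ^ α i| = (|∏ i ∈ s, x i ^ α i| ^ D) ^ ((1 : ℝ) / D) := by
        rw [one_div, Real.pow_rpow_inv_natCast (abs_nonneg _) hD0]
    _ ≤ _ := Real.rpow_le_rpow (by positivity) amgm (by positivity)

theorem div_pow_mul_rpow_one_div {S P D : ℝ} (k : ℕ) (hS : 0 ≤ S) (hP : 0 ≤ P) :
    ((S / k) ^ k * P) ^ (1 / D) = (P / (k : ℝ) ^ (k : ℝ)) ^ (1 / D) * S ^ (k / D) := by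
  have hsplit : (S / k) ^ k * P = (S ^ k) * (P / (k : ℝ) ^ (k : ℝ)) := by
    rw [Real.rpow_natCast, div_pow, div_mul_eq_mul_div, mul_div_assoc]
  rw [hsplit, Real.mul_rpow (by positivity) (by positivity), mul_comm, ← Real.rpow_natCast,
    ← Real.rpow_mul hS, mul_one_div]

theorem rpow_one_sub_div_le_of_lt {a P M s : ℝ} {D : ℕ} (hD : Even D) (hs : 0 < s)
    (hsD : s < D) (hP : 0 ≤ P) (hM : 0 ≤ M) (h : M < s * ((a / D) ^ D * P) ^ (1 / (D - s))) :
    M ^ (1 - s / D) ≤ |a| * (P / s ^ s) ^ (1 / (D : ℝ)) * (s / D) := by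
  have hD0 : (0 : ℝ) < D := hs.trans hsD
  have he : 0 < 1 - s / D := by rw [sub_pos, div_lt_one hD0]; exact hsD
  have hb : 0 ≤ |a| / D := by positivity
  have hB : (a / D) ^ D * P = (|a| / D) ^ (D : ℝ) * P := by
    rw [Real.rpow_natCast, ← hD.pow_abs, abs_div, Nat.abs_cast]
  have hexp : 1 / (D - s) * (1 - s / D) = 1 / D := by
    field_simp [(sub_pos.2 hsD).ne']
  rw [hB] at h
  calc M ^ (1 - s / D) ≤ (s * ((|a| / D) ^ (D : ℝ) * P) ^ (1 / (D - s))) ^ (1 - s / D) :=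
        Real.rpow_le_rpow hM h.le he.le
    _ = s ^ (1 - s / D) * ((|a| / D) * P ^ (1 / (D : ℝ))) := by
        rw [Real.mul_rpow hs.le (by positivity), ← Real.rpow_mul (by positivity), hexp,
          Real.mul_rpow (by positivity) hP, ← Real.rpow_mul hb, mul_one_div_cancel hD0.ne',
          Real.rpow_one]
    _ = _ := by
        rw [Real.rpow_sub hs, Real.rpow_one, Real.div_rpow hP (by positivity),
          ← Real.rpow_mul hs.le]
        field_simp

/-- The weighted AM-GM inequality `S^t M^(1-t) ≤ t S + (1-t) M` replaces the derivative of
`S ↦ S - k S^t`. -/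
theorem sub_mul_rpow_le_sub_mul_rpow_of_rpow_le {t k S M : ℝ} (ht0 : 0 < t) (ht1 : t ≤ 1)
    (hS : 0 ≤ S) (hSM : S ≤ M) (hM : M ^ (1 - t) ≤ k * t) :
    M - k * M ^ t ≤ S - k * S ^ t := by
  have hM0 : 0 ≤ M := hS.trans hSM
  have hsplit : M ^ (1 - t) * M ^ t = M := by
    rw [← Real.rpow_add' hM0 (by norm_num), sub_add_cancel, Real.rpow_one]
  have hyoung : S ^ t * M ^ (1 - t) ≤ t * S + (1 - t) * M :=
    Real.geom_mean_le_arith_mean2_weighted ht0.le (sub_nonneg.2 ht1) hS hM0 (by ring)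
  have hmono : S ^ t ≤ M ^ t := Real.rpow_le_rpow hS hSM ht0.le
  have key : t * (M - S) ≤ t * (k * (M ^ t - S ^ t)) :=
    calc t * (M - S) ≤ M ^ (1 - t) * (M ^ t - S ^ t) := by nlinarith
      _ ≤ k * t * (M ^ t - S ^ t) := mul_le_mul_of_nonneg_right hM (sub_nonneg.2 hmono)
      _ = t * (k * (M ^ t - S ^ t)) := by ring
  linarith [le_of_mul_le_mul_left key ht0]

theorem stmt_11_general (n d : ℕ) (α : Fin n → ℕ)
    (hα0 : 0 < ∑ i, α i) (hαlt : ∑ i, α i < 2 * d)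
    (fα : ℝ) (f0 M : ℝ) (hM : 0 < M)
    (hMlt : M < ((∑ i, α i : ℕ) : ℝ) *
        (((fα / (2 * (d : ℝ))) ^ (2 * d) * ∏ i, ((α i : ℝ)) ^ (α i)) ^
          ((1 : ℝ) / (2 * (d : ℝ) - ((∑ i, α i : ℕ) : ℝ))))) :
    ∀ x : Fin n → ℝ, (∑ i, x i ^ (2 * d)) ≤ M →
      f0 + M - |fα| *
          (((M / ((∑ i, α i : ℕ) : ℝ)) ^ (∑ i, α i) * ∏ i, ((α i : ℝ)) ^ (α i)) ^
            ((1 : ℝ) / (2 * (d : ℝ)))) ≤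
        f0 + (∑ i, x i ^ (2 * d)) + fα * ∏ i, x i ^ (α i) := by
  intro x hx
  have hD : 2 * (d : ℝ) = ((2 * d : ℕ) : ℝ) := by push_cast; ring
  have hs : (0 : ℝ) < (∑ i, α i : ℕ) := by exact_mod_cast hα0
  have hsD : ((∑ i, α i : ℕ) : ℝ) < (2 * d : ℕ) := by exact_mod_cast hαlt
  have hP : 0 ≤ ∏ i, (α i : ℝ) ^ α i := prod_nonneg fun i _ => by positivity
  have hS : 0 ≤ ∑ i, x i ^ (2 * d) := sum_nonneg fun i _ => (even_two_mul d).pow_nonneg _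
  rw [hD] at hMlt ⊢
  have hmonomial := abs_prod_pow_le univ α x (even_two_mul d) (by omega) hα0
  have hthreshold := rpow_one_sub_div_le_of_lt (even_two_mul d) hs hsD hP hM.le hMlt
  rw [div_pow_mul_rpow_one_div _ hS hP] at hmonomial
  rw [div_pow_mul_rpow_one_div _ hM.le hP]
  have hdecrease := sub_mul_rpow_le_sub_mul_rpow_of_rpow_le (div_pos hs (hs.trans hsD))
    (div_le_one_of_le₀ hsD.le (by positivity)) hS hx hthreshold
  have hbound := neg_abs_le (fα * ∏ i, x i ^ α i)
  rw [abs_mul] at hbound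
  linarith [mul_le_mul_of_nonneg_left hmonomial (abs_nonneg fα)]

/-- For `f(x) = f(0) + ∑ᵢ xᵢ^(2d) + f_α x^α` with `0 < |α| < 2d` and
`f_α x^α` not a square, if `0 < M < |α|·[(f_α/2d)^(2d)·α^α]^(1/(2d-|α|))` then
`f(x) ≥ f(0) + M - |f_α|·[(M/|α|)^|α|·α^α]^(1/(2d))` on the ball. -/
theorem stmt_11 (n d : ℕ) (hd : 1 ≤ d) (α : Fin n → ℕ)
    (hα0 : 0 < ∑ i, α i) (hαlt : ∑ i, α i < 2 * d)
    (fα : ℝ) (hfα : fα ≠ 0) (hns : ¬ (0 ≤ fα ∧ ∀ i, Even (α i)))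
    (f0 M : ℝ) (hM : 0 < M)
    (hMlt : M < ((∑ i, α i : ℕ) : ℝ) *
        (((fα / (2 * (d : ℝ))) ^ (2 * d) * ∏ i, ((α i : ℝ)) ^ (α i)) ^
          ((1 : ℝ) / (2 * (d : ℝ) - ((∑ i, α i : ℕ) : ℝ))))) :
    ∀ x : Fin n → ℝ, (∑ i, x i ^ (2 * d)) ≤ M →
      f0 + M - |fα| *
          (((M / ((∑ i, α i : ℕ) : ℝ)) ^ (∑ i, α i) * ∏ i, ((α i : ℝ)) ^ (α i)) ^
            ((1 : ℝ) / (2 * (d : ℝ)))) ≤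
        f0 + (∑ i, x i ^ (2 * d)) + fα * ∏ i, x i ^ (α i) :=
  stmt_11_general n d α hα0 hαlt fα f0 M hM hMlt
end

section
/- Let f(x) = f(0) + Σᵢ₌₁ⁿ xᵢ^{2d} + f_α x^α with |α| = 2d and f_α x^α not a square. If (f_α/2d)^{2d}·α^α ≤ 1, then f(x) ≥ f(0) for all x ∈ ℝⁿ. -/
/-!
Weighted AM-GM with weights `αᵢ / 2d` applied to `xᵢ^(2d) / αᵢ`, raised to the power `2d`,
gives `(x^α)^(2d) · (2d)^(2d) ≤ α^α (∑ xᵢ^(2d))^(2d)`. The hypothesis on `f_α` then says exactly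
that `|f_α x^α| ≤ ∑ xᵢ^(2d)`, so the monomial can never pull `f` below `f(0)`.
-/

open Finset

namespace Real

variable {ι : Type*} (s : Finset ι) (k : ι → ℕ) {y : ι → ℝ}

theorem prod_div_pow_le_sum_div_pow (hy : ∀ i ∈ s, 0 ≤ y i) :
    ∏ i ∈ s, (y i / k i) ^ k i ≤ ((∑ i ∈ s, y i) / ∑ i ∈ s, k i) ^ ∑ i ∈ s, k i := by
  set K := ∑ i ∈ s, k i
  rcases Nat.eq_zero_or_pos K with hK | hK
  · rw [hK, pow_zero]
    rw [Finset.sum_eq_zero_iff] at hK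
    exact (Finset.prod_eq_one fun i hi => by rw [hK i hi, pow_zero]).le
  have hK' : (0 : ℝ) < K := by exact_mod_cast hK
  have hz : ∀ i ∈ s, 0 ≤ y i / k i := fun i hi => div_nonneg (hy i hi) (Nat.cast_nonneg _)
  have hweights : ∑ i ∈ s, (k i / K : ℝ) = 1 := by
    rw [← Finset.sum_div, ← Nat.cast_sum, div_self hK'.ne']
  have amgm := geom_mean_le_arith_mean_weighted s (fun i => (k i / K : ℝ)) (fun i => y i / k i)
    (fun i _ => by positivity) hweights hz
  have hmean : ∑ i ∈ s, (k i / K : ℝ) * (y i / k i) ≤ (∑ i ∈ s, y i) / K := by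
    rw [Finset.sum_div]
    refine Finset.sum_le_sum fun i hi => ?_
    rcases eq_or_ne (k i) 0 with h | h
    · simp only [h, CharP.cast_eq_zero, zero_div, zero_mul]
      exact div_nonneg (hy i hi) hK'.le
    · have : (k i : ℝ) ≠ 0 := by exact_mod_cast h
      exact (by field_simp : (k i / K : ℝ) * (y i / k i) = y i / K).le
  calc ∏ i ∈ s, (y i / k i) ^ k i
      = (∏ i ∈ s, (y i / k i) ^ (k i / K : ℝ)) ^ K := by
        rw [← Finset.prod_pow]
        refine Finset.prod_congr rfl fun i hi => ?_
        rw [← rpow_mul_natCast (hz i hi), div_mul_cancel₀ _ hK'.ne', rpow_natCast]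
    _ ≤ ((∑ i ∈ s, y i) / K) ^ K :=
        pow_le_pow_left₀ (Finset.prod_nonneg fun i hi => rpow_nonneg (hz i hi) _)
          (amgm.trans hmean) K

theorem prod_pow_le_prod_pow_self_mul_sum_div_pow (hy : ∀ i ∈ s, 0 ≤ y i) :
    ∏ i ∈ s, y i ^ k i ≤
      (∏ i ∈ s, (k i : ℝ) ^ k i) * ((∑ i ∈ s, y i) / ∑ i ∈ s, k i) ^ ∑ i ∈ s, k i := by
  have hsplit : ∏ i ∈ s, y i ^ k i = (∏ i ∈ s, (k i : ℝ) ^ k i) * ∏ i ∈ s, (y i / k i) ^ k i := by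
    rw [← Finset.prod_mul_distrib]
    refine Finset.prod_congr rfl fun i _ => ?_
    rcases eq_or_ne (k i) 0 with h | h
    · simp [h]
    · have : (k i : ℝ) ≠ 0 := by exact_mod_cast h
      rw [← mul_pow, mul_div_cancel₀ _ this]
  rw [hsplit]
  exact mul_le_mul_of_nonneg_left (prod_div_pow_le_sum_div_pow s k hy)
    (Finset.prod_nonneg fun i _ => by positivity)

end Real

theorem abs_mul_prod_pow_le_sum_pow {n d : ℕ} (hd : 1 ≤ d) {α : Fin n → ℕ}
    (hαeq : ∑ i, α i = 2 * d) {c : ℝ}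
    (hle : (c / (2 * (d : ℝ))) ^ (2 * d) * ∏ i, ((α i : ℝ)) ^ (α i) ≤ 1) (x : Fin n → ℝ) :
    |c * ∏ i, x i ^ α i| ≤ ∑ i, x i ^ (2 * d) := by
  set S := ∑ i, x i ^ (2 * d)
  have hy : ∀ i ∈ univ, 0 ≤ x i ^ (2 * d) := fun i _ => (even_two_mul d).pow_nonneg _
  have hS : 0 ≤ S := Finset.sum_nonneg hy
  have hamgm := Real.prod_pow_le_prod_pow_self_mul_sum_div_pow univ α hy
  rw [hαeq] at hamgm
  refine (pow_le_pow_iff_left₀ (abs_nonneg _) hS (by omega : 2 * d ≠ 0)).mp ?_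
  calc |c * ∏ i, x i ^ α i| ^ (2 * d)
      = c ^ (2 * d) * ∏ i, (x i ^ (2 * d)) ^ α i := by
        rw [(even_two_mul d).pow_abs, mul_pow, ← Finset.prod_pow]
        simp only [← pow_mul, mul_comm]
    _ ≤ c ^ (2 * d) * ((∏ i, (α i : ℝ) ^ α i) * (S / (2 * d : ℕ)) ^ (2 * d)) :=
        mul_le_mul_of_nonneg_left hamgm ((even_two_mul d).pow_nonneg c)
    _ = (c / (2 * (d : ℝ))) ^ (2 * d) * (∏ i, ((α i : ℝ)) ^ (α i)) * S ^ (2 * d) := by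
        push_cast; rw [div_pow, div_pow]; field_simp
    _ ≤ S ^ (2 * d) := mul_le_of_le_one_left (by positivity) hle

theorem stmt_12_general (n d : ℕ) (hd : 1 ≤ d) (α : Fin n → ℕ)
    (hαeq : ∑ i, α i = 2 * d)
    (fα : ℝ)
    (f0 : ℝ)
    (hle : (fα / (2 * (d : ℝ))) ^ (2 * d) * ∏ i, ((α i : ℝ)) ^ (α i) ≤ 1) :
    ∀ x : Fin n → ℝ,
      f0 ≤ f0 + (∑ i, x i ^ (2 * d)) + fα * ∏ i, x i ^ (α i) := fun x => by
  linarith [neg_abs_le (fα * ∏ i, x i ^ α i), abs_mul_prod_pow_le_sum_pow hd hαeq hle x]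

/-- For `f(x) = f(0) + ∑ᵢ xᵢ^(2d) + f_α x^α` with `|α| = 2d` and `f_α x^α`
not a square, if `(f_α/2d)^(2d)·α^α ≤ 1` then `f(x) ≥ f(0)` for all `x ∈ ℝⁿ`. -/
theorem stmt_12 (n d : ℕ) (hd : 1 ≤ d) (α : Fin n → ℕ)
    (hαeq : ∑ i, α i = 2 * d)
    (fα : ℝ) (hfα : fα ≠ 0) (hns : ¬ (0 ≤ fα ∧ ∀ i, Even (α i)))
    (f0 : ℝ)
    (hle : (fα / (2 * (d : ℝ))) ^ (2 * d) * ∏ i, ((α i : ℝ)) ^ (α i) ≤ 1) :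
    ∀ x : Fin n → ℝ,
      f0 ≤ f0 + (∑ i, x i ^ (2 * d)) + fα * ∏ i, x i ^ (α i) :=
  stmt_12_general n d hd α hαeq fα f0 hle
end

section
/- Let f(x) = f(0) + Σᵢ₌₁ⁿ xᵢ^{2d} + f_α x^α with |α| = 2d and f_α x^α not a square, and suppose (f_α/2d)^{2d}·α^α > 1. Then f(x) ≥ f(0) - M·([(f_α/2d)^{2d}·α^α]^{1/(2d)} - 1) for all x with Σᵢ xᵢ^{2d} ≤ M. -/
open Finset

private lemma amgm_aux (n d : ℕ) (hd : 1 ≤ d) (α : Fin n → ℕ) (hαeq : ∑ i, α i = 2 * d)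
    (x : Fin n → ℝ) :
    ∏ i, |x i| ^ (α i) ≤
      (∏ i, ((α i : ℝ)) ^ (α i)) ^ ((1:ℝ)/(2*(d:ℝ))) * ((∑ i, x i ^ (2*d)) / (2*(d:ℝ))) := by
  have hD : (0:ℝ) < 2*(d:ℝ) := by positivity
  set D : ℝ := 2*(d:ℝ) with hDdef
  set w : Fin n → ℝ := fun i => (α i : ℝ) / D with hw
  set z : Fin n → ℝ := fun i => if α i = 0 then 0 else x i ^ (2*d) / (α i : ℝ) with hz
  have hxpow : ∀ i, (0:ℝ) ≤ x i ^ (2*d) := fun i => (even_two_mul d).pow_nonneg _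
  have hzn : ∀ i ∈ univ, (0:ℝ) ≤ z i := by
    intro i _
    simp only [hz]
    split
    · exact le_refl 0
    · exact div_nonneg (hxpow i) (Nat.cast_nonneg _)
  have hsum : ∑ i, w i = 1 := by
    simp only [hw, ← Finset.sum_div]
    rw [div_eq_one_iff_eq hD.ne', ← Nat.cast_sum, hαeq]
    push_cast
    ring
  have h1 := Real.geom_mean_le_arith_mean_weighted univ w z
    (fun i _ => by positivity) hsum hzn
  -- identify the product
  have hprod : ∏ i, |x i| ^ (α i) =
      (∏ i, z i ^ w i) * (∏ i, ((α i : ℝ)) ^ (α i)) ^ ((1:ℝ)/D) := by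
    rw [← Real.finset_prod_rpow _ _ (fun i _ => by positivity) _, ← Finset.prod_mul_distrib]
    apply Finset.prod_congr rfl
    intro i _
    by_cases h0 : α i = 0
    · simp [hz, hw, h0, Real.rpow_natCast]
    · have hαpos : (0:ℝ) < (α i : ℝ) := by positivity
      simp only [hz, hw, if_neg h0]
      rw [Real.div_rpow (hxpow i) hαpos.le]
      have e1 : (x i ^ (2*d) : ℝ) ^ ((α i : ℝ)/D) = |x i| ^ (α i) := by
        rw [← (even_two_mul d).pow_abs (x i), ← Real.rpow_natCast |x i| (2*d), ← Real.rpow_mul (abs_nonneg _)]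
        have : ((2*d : ℕ) : ℝ) * ((α i : ℝ)/D) = (α i : ℝ) := by
          push_cast [hDdef]
          field_simp
        rw [this, Real.rpow_natCast]
      have e2 : ((α i : ℝ) ^ (α i)) ^ ((1:ℝ)/D) = (α i : ℝ) ^ ((α i : ℝ)/D) := by
        rw [← Real.rpow_natCast (α i : ℝ) (α i), ← Real.rpow_mul hαpos.le]
        congr 1
        ring
      rw [e1, e2]
      field_simp
  have hsum2 : ∑ i, w i * z i ≤ (∑ i, x i ^ (2*d)) / D := by
    rw [Finset.sum_div]
    apply Finset.sum_le_sum
    intro i _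
    by_cases h0 : α i = 0
    · simp only [hz, hw, if_pos h0, mul_zero]
      exact div_nonneg (hxpow i) hD.le
    · simp only [hz, hw, if_neg h0]
      have hαpos : (0:ℝ) < (α i : ℝ) := by positivity
      have hne := hαpos.ne'
      rw [show (α i:ℝ)/D * (x i ^ (2*d)/(α i:ℝ)) = x i ^ (2*d)/D from by field_simp]
  have hA : (0:ℝ) ≤ (∏ i, ((α i : ℝ)) ^ (α i)) ^ ((1:ℝ)/D) := by positivity
  calc ∏ i, |x i| ^ (α i)
      = (∏ i, z i ^ w i) * (∏ i, ((α i : ℝ)) ^ (α i)) ^ ((1:ℝ)/D) := hprod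
    _ ≤ ((∑ i, x i ^ (2*d)) / D) * (∏ i, ((α i : ℝ)) ^ (α i)) ^ ((1:ℝ)/D) := by
        apply mul_le_mul_of_nonneg_right _ hA
        exact h1.trans hsum2
    _ = _ := by ring

/-- For `f(x) = f(0) + ∑ᵢ xᵢ^(2d) + f_α x^α` with `|α| = 2d`, `f_α x^α` not a
square, and `(f_α/2d)^(2d)·α^α > 1`, one has
`f(x) ≥ f(0) - M·([(f_α/2d)^(2d)·α^α]^(1/(2d)) - 1)` on the ball `∑ xᵢ^(2d) ≤ M`. -/
theorem stmt_13 (n d : ℕ) (hd : 1 ≤ d) (α : Fin n → ℕ)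
    (hαeq : ∑ i, α i = 2 * d)
    (fα : ℝ) (hfα : fα ≠ 0) (hns : ¬ (0 ≤ fα ∧ ∀ i, Even (α i)))
    (f0 M : ℝ) (hM : 0 < M)
    (hgt : 1 < (fα / (2 * (d : ℝ))) ^ (2 * d) * ∏ i, ((α i : ℝ)) ^ (α i)) :
    ∀ x : Fin n → ℝ, (∑ i, x i ^ (2 * d)) ≤ M →
      f0 - M * (((fα / (2 * (d : ℝ))) ^ (2 * d) * ∏ i, ((α i : ℝ)) ^ (α i)) ^
          ((1 : ℝ) / (2 * (d : ℝ))) - 1) ≤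
        f0 + (∑ i, x i ^ (2 * d)) + fα * ∏ i, x i ^ (α i) := by
  intro x hx
  have hD : (0:ℝ) < 2*(d:ℝ) := by positivity
  set A : ℝ := ∏ i, ((α i : ℝ)) ^ (α i) with hAdef
  have hA0 : (0:ℝ) ≤ A := Finset.prod_nonneg fun i _ => by positivity
  set c : ℝ := (fα / (2 * (d : ℝ))) ^ (2 * d) * A with hcdef
  set r : ℝ := c ^ ((1 : ℝ) / (2 * (d : ℝ))) with hrdef
  have hS0 : (0:ℝ) ≤ ∑ i, x i ^ (2*d) :=
    Finset.sum_nonneg fun i _ => (even_two_mul d).pow_nonneg _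
  set S : ℝ := ∑ i, x i ^ (2*d) with hSdef
  -- r = (|fα|/D) * A^(1/D)
  have hceq : c = (|fα| / (2*(d:ℝ))) ^ (2*d) * A := by
    rw [hcdef]
    congr 1
    rw [show |fα| / (2*(d:ℝ)) = |fα / (2*(d:ℝ))| from by rw [abs_div, abs_of_pos hD],
      (even_two_mul d).pow_abs]
  have hreq : r = (|fα| / (2*(d:ℝ))) * A ^ ((1:ℝ)/(2*(d:ℝ))) := by
    rw [hrdef, hceq, Real.mul_rpow (by positivity) hA0]
    congr 1
    rw [← Real.rpow_natCast (|fα| / (2*(d:ℝ))) (2*d), ← Real.rpow_mul (by positivity)]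
    rw [show ((2*d : ℕ):ℝ) * ((1:ℝ)/(2*(d:ℝ))) = 1 by push_cast; field_simp]
    exact Real.rpow_one _
  -- key bound
  have hkey : |fα * ∏ i, x i ^ (α i)| ≤ r * S := by
    rw [abs_mul, abs_prod]
    simp only [abs_pow]
    calc |fα| * ∏ i, |x i| ^ (α i)
        ≤ |fα| * (A ^ ((1:ℝ)/(2*(d:ℝ))) * (S / (2*(d:ℝ)))) := by
          apply mul_le_mul_of_nonneg_left _ (abs_nonneg _)
          exact amgm_aux n d hd α hαeq x
      _ = r * S := by rw [hreq]; field_simp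
  have hr1 : 1 < r := by
    rw [hrdef]
    exact (Real.one_lt_rpow_iff_of_pos (lt_trans zero_lt_one hgt)).mpr
      (Or.inl ⟨hgt, by positivity⟩)
  have hlb : -(r*S) ≤ fα * ∏ i, x i ^ (α i) := neg_le_of_abs_le hkey
  nlinarith [mul_le_mul_of_nonneg_right hx (by linarith : (0:ℝ) ≤ r - 1)]
end
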